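/- arXiv:1602.08472 — 2 statements merged into one kernel-verified Lean document; each statement's English description precedes it below -/
import Mathlib

section
/- Soundness of ExpSOS under HCS model: let N be a squarefree positive integer, p a positive integer, L = p·N, u ∈ Z_N a base, a ≥ 1 an exponent, and r, k ≥ 0 arbitrary. Set U = (u + r·N) mod L and A = a + k·φ(N). Then (U^A mod L) mod N = u^a mod N. -/
/-!
Reducing `U` modulo `L` and then modulo `N` is the same as reducing modulo `N`, because `N ∣ L`,
and `U ≡ u [MOD N]`. So it remains to see that `u ^ (a + k φ(N)) ≡ u ^ a [MOD N]`. As `N` is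
squarefree, this may be checked modulo each prime `q ∣ N`: if `q ∣ u` both sides vanish, the
exponents being positive, and otherwise Fermat gives `u ^ (q - 1) ≡ 1`, where `q - 1 = φ(q) ∣ φ(N)`.
-/

namespace Nat

theorem modEq_of_squarefree_of_forall_primeFactors {n x y : ℕ} (hn : Squarefree n)
    (h : ∀ q ∈ n.primeFactors, x ≡ y [MOD q]) : x ≡ y [MOD n] := by
  rw [modEq_iff_dvd, Int.natCast_dvd, ← prod_primeFactors_of_squarefree hn]
  refine Finset.prod_primes_dvd _ (fun q hq => (prime_of_mem_primeFactors hq).prime) fun q hq => ?_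
  rw [← Int.natCast_dvd, ← modEq_iff_dvd]
  exact h q hq

theorem pow_add_modEq_pow_of_prime {q x a m : ℕ} (hq : q.Prime) (ha : a ≠ 0) (hm : q - 1 ∣ m) :
    x ^ (a + m) ≡ x ^ a [MOD q] := by
  obtain ⟨t, rfl⟩ := hm
  by_cases hqx : q ∣ x
  · have hzero : ∀ b ≠ 0, x ^ b ≡ 0 [MOD q] := fun b hb =>
      modEq_zero_iff_dvd.2 (dvd_pow hqx hb)
    exact (hzero _ (by omega)).trans (hzero a ha).symm
  · have hfermat : x ^ (q - 1) ≡ 1 [MOD q] :=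
      ModEq.pow_card_sub_one_eq_one hq ((hq.coprime_iff_not_dvd.2 hqx).symm)
    calc x ^ (a + (q - 1) * t) = x ^ a * (x ^ (q - 1)) ^ t := by rw [pow_add, pow_mul]
      _ ≡ x ^ a * 1 ^ t [MOD q] := (hfermat.pow t).mul_left _
      _ = x ^ a := by rw [one_pow, mul_one]

theorem pow_add_modEq_pow_of_squarefree {n x a m : ℕ} (hn : Squarefree n) (ha : a ≠ 0)
    (hm : φ n ∣ m) : x ^ (a + m) ≡ x ^ a [MOD n] :=
  modEq_of_squarefree_of_forall_primeFactors hn fun q hq => by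
    have hq' := prime_of_mem_primeFactors hq
    refine pow_add_modEq_pow_of_prime hq' ha ?_
    rw [← totient_prime hq']
    exact (totient_dvd_of_dvd (dvd_of_mem_primeFactors hq)).trans hm

end Nat

theorem expsos_soundness_general (N p L u a r k U A : ℕ)
    (hsq : Squarefree N) (hL : L = p * N)
    (ha : 1 ≤ a)
    (hU : U = (u + r * N) % L) (hA : A = a + k * Nat.totient N) :
    (U ^ A % L) % N = u ^ a % N := by
  have hNL : N ∣ L := hL ▸ dvd_mul_left N p
  have hUu : U ≡ u [MOD N] := by
    rw [hU]
    refine ((Nat.mod_modEq _ _).of_dvd hNL).trans ?_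
    exact Nat.add_mul_mod_self_right u r N
  calc U ^ A % L % N = U ^ A % N := Nat.mod_mod_of_dvd _ hNL
    _ = u ^ A % N := hUu.pow A
    _ = u ^ a % N := hA ▸ Nat.pow_add_modEq_pow_of_squarefree hsq (by omega) (dvd_mul_left _ _)

theorem expsos_soundness (N p L u a r k U A : ℕ)
    (hN : 0 < N) (hsq : Squarefree N) (hp : 0 < p) (hL : L = p * N)
    (hu : u < N) (ha : 1 ≤ a)
    (hU : U = (u + r * N) % L) (hA : A = a + k * Nat.totient N) :
    (U ^ A % L) % N = u ^ a % N :=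
  expsos_soundness_general N p L u a r k U A hsq hL ha hU hA
end

section
/- Recovery of DSA public key: with p prime, g coprime to p, X = x + k1·(p−1), L = Q·p for a prime Q, G = (g + r·p) mod L, the recovered value (G^X mod L) mod p equals g^x mod p. -/
/-! Since `p ∣ L`, reducing modulo `p` undoes the blinding `r * p` of the base, and Euler's theorem
(`φ p = p - 1`) undoes the blinding `k1 * (p - 1)` of the exponent. -/

open Nat

theorem Nat.ModEq.pow_add_mul_totient {a n : ℕ} (ha : a.Coprime n) (x k : ℕ) :
    a ^ (x + k * φ n) ≡ a ^ x [MOD n] :=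
  calc a ^ (x + k * φ n) = a ^ x * (a ^ φ n) ^ k := by rw [pow_add, pow_mul']
    _ ≡ a ^ x * 1 ^ k [MOD n] := (ModEq.pow_totient ha |>.pow k).mul_left _
    _ = a ^ x := by rw [one_pow, mul_one]

theorem Nat.add_mul_mod_modEq {p L : ℕ} (hpL : p ∣ L) (a r : ℕ) :
    (a + r * p) % L ≡ a [MOD p] :=
  calc (a + r * p) % L ≡ a + r * p [MOD p] := (mod_modEq _ L).of_dvd hpL
    _ ≡ a [MOD p] := by rw [ModEq, add_mul_mod_self_right]

theorem dsa_key_recovery_general (p g x k1 r Q L X G : ℕ)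
    (hp : p.Prime) (hg : Nat.Coprime g p)
    (hL : L = Q * p) (hX : X = x + k1 * (p - 1)) (hG : G = (g + r * p) % L) :
    (G ^ X % L) % p = g ^ x % p := by
  have hpL : p ∣ L := hL ▸ dvd_mul_left p Q
  rw [Nat.mod_mod_of_dvd _ hpL]
  calc G ^ X ≡ g ^ X [MOD p] := hG ▸ (Nat.add_mul_mod_modEq hpL g r).pow X
    _ ≡ g ^ x [MOD p] := by
      rw [hX, ← totient_prime hp]
      exact Nat.ModEq.pow_add_mul_totient hg x k1

theorem dsa_key_recovery (p g x k1 r Q L X G : ℕ)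
    (hp : p.Prime) (hg : Nat.Coprime g p) (hQ : Q.Prime)
    (hL : L = Q * p) (hX : X = x + k1 * (p - 1)) (hG : G = (g + r * p) % L) :
    (G ^ X % L) % p = g ^ x % p :=
  dsa_key_recovery_general p g x k1 r Q L X G hp hg hL hX hG
end
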